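/- arXiv:0708.1558 — 2 statements merged into one kernel-verified Lean document; each statement's English description precedes it below -/
import Mathlib

section
/- Let α, β, γ be distinct elements of GF(q^2) with ((α−β)/(γ−β))^{q−1} ≠ 1. Then the only solution (U,V,W) ∈ GF(q^2)^3 of the linear system U + α^q V + α W = 0, U + β^q V + β W = 0, U + γ^q V + γ W = 0 is U = V = W = 0. -/
/-! Subtracting the second equation from the other two, and using that `x ↦ x ^ q` is additive
because `q` is a power of the characteristic, gives the system `a ^ q V + a W = 0`,
`c ^ q V + c W = 0` with `a = α - β`, `c = γ - β`. Its determinant `c a ^ q - a c ^ q` vanishes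
exactly when `(a / c) ^ (q - 1) = 1`, so `V = W = 0`, and then `U = 0`. -/

theorem FiniteField.sub_pow_of_dvd_card {F : Type*} [Field F] [Fintype F] {q : ℕ}
    (hq : q ∣ Fintype.card F) (a b : F) : (a - b) ^ q = a ^ q - b ^ q := by
  obtain ⟨n, hp, hcard⟩ := FiniteField.card F (ringChar F)
  rw [hcard, Nat.dvd_prime_pow hp] at hq
  obtain ⟨m, -, rfl⟩ := hq
  have := Fact.mk hp
  exact sub_pow_char_pow a b m

theorem pow_sub_one_eq_one_of_pow_eq_self {M : Type*} [MonoidWithZero M] [IsCancelMulZero M]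
    {x : M} (hx : x ≠ 0) {n : ℕ} (h : x ^ n = x) : x ^ (n - 1) = 1 := by
  cases n with
  | zero => simp
  | succ n => exact mul_right_cancel₀ hx (by simpa [pow_succ] using h)

theorem eq_zero_of_pow_mul_add_mul_eq_zero {K : Type*} [Field K] {n : ℕ} {a c V W : K}
    (ha : a ≠ 0) (hc : c ≠ 0) (hac : (a / c) ^ (n - 1) ≠ 1)
    (hA : a ^ n * V + a * W = 0) (hC : c ^ n * V + c * W = 0) : V = 0 ∧ W = 0 := by
  have hV : V = 0 := by
    by_contra hV
    have hdet : c * a ^ n = a * c ^ n := by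
      refine sub_eq_zero.mp ((mul_eq_zero.mp ?_).resolve_right hV)
      linear_combination c * hA - a * hC
    refine hac (pow_sub_one_eq_one_of_pow_eq_self (div_ne_zero ha hc) ?_)
    rw [div_pow, div_eq_div_iff (pow_ne_zero _ hc) hc]
    linear_combination hdet
  refine ⟨hV, (mul_eq_zero.mp ?_).resolve_left ha⟩
  simpa [hV] using hA

theorem linear_system_trivial_solution_general (q : ℕ)
    (F : Type) [Field F] [Fintype F] (hF : Fintype.card F = q ^ 2)
    (α β γ : F) (hαβ : α ≠ β) (hβγ : β ≠ γ)
    (harc : ((α - β) / (γ - β)) ^ (q - 1) ≠ 1)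
    (U V W : F)
    (h1 : U + α ^ q * V + α * W = 0)
    (h2 : U + β ^ q * V + β * W = 0)
    (h3 : U + γ ^ q * V + γ * W = 0) :
    U = 0 ∧ V = 0 ∧ W = 0 := by
  have hfrob := FiniteField.sub_pow_of_dvd_card (hF ▸ dvd_pow_self q two_ne_zero)
  obtain ⟨hV, hW⟩ := eq_zero_of_pow_mul_add_mul_eq_zero (V := V) (W := W)
    (sub_ne_zero.mpr hαβ) (sub_ne_zero.mpr hβγ.symm) harc
    (by rw [hfrob]; linear_combination h1 - h2) (by rw [hfrob]; linear_combination h3 - h2)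
  exact ⟨by simpa [hV, hW] using h1, hV, hW⟩

/-- For distinct `α, β, γ ∈ GF(q^2)` with `((α-β)/(γ-β))^(q-1) ≠ 1`, the only solution of
the system `U + α^q V + α W = 0`, `U + β^q V + β W = 0`, `U + γ^q V + γ W = 0` is
`U = V = W = 0`. -/
theorem linear_system_trivial_solution (q : ℕ) (hq : IsPrimePow q)
    (F : Type) [Field F] [Fintype F] (hF : Fintype.card F = q ^ 2)
    (α β γ : F) (hαβ : α ≠ β) (hαγ : α ≠ γ) (hβγ : β ≠ γ)
    (harc : ((α - β) / (γ - β)) ^ (q - 1) ≠ 1)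
    (U V W : F)
    (h1 : U + α ^ q * V + α * W = 0)
    (h2 : U + β ^ q * V + β * W = 0)
    (h3 : U + γ ^ q * V + γ * W = 0) :
    U = 0 ∧ V = 0 ∧ W = 0 :=
  linear_system_trivial_solution_general q F hF α β γ hαβ hβγ harc U V W h1 h2 h3
end

section
/- With notation as in the construction (Λ of size N ≥ 3 satisfying the arc condition, S a transversal of T_0, Ω = GF(q^2) × S), the code C = {(F_λ(x,y))_{λ∈Λ} : (x,y) ∈ Ω} ⊆ GF(q)^N has minimum Hamming distance exactly N−2; that is, every nonzero codeword has at most 2 zero coordinates, and some nonzero codeword has exactly 2 zero coordinates. -/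
/-!
With `T(z) = z^q + z`, two coordinates of a codeword differ by
`F_α(x,y) - F_β(x,y) = T((α - β) x)`, and every nonzero `w` with `T(w) = 0` has
`w^(q-1) = -1`. So three zeros `α, β, γ` of a codeword with `x ≠ 0` force
`((α-β)/(γ-β))^(q-1) = 1`, which the arc condition forbids; for `x = 0` all coordinates coincide.

Conversely, `T` is additive on `GF(q^2)`, and its kernel and its image (which lies in `GF(q)`)
are root sets of polynomials of degree `q`; as their sizes multiply to `q^2`, both have exactly
`q` elements. Pick `u ≠ 0` in the kernel and `x = u / (α - β)`: then `F_α(x,·) = F_β(x,·)`.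
Since `F_α(x,0) ∈ GF(q)` lies in the image of `T`, some `y` kills it, and the representative of
`y` in `S` still does.
-/

/-- The Hermitian form `F_λ(x,y) = x^(q+1) + y^q + y + λ^q x^q + λ x`. -/
def Fl (q : ℕ) {F : Type*} [Field F] (l x y : F) : F :=
  x ^ (q + 1) + y ^ q + y + l ^ q * x ^ q + l * x

open Polynomial

section AdditivePower

variable {F : Type*} [Field F] {q : ℕ} (hq : ∀ a b : F, (a + b) ^ q = a ^ q + b ^ q)
include hq

theorem ne_zero_of_add_pow : q ≠ 0 := by
  rintro rfl
  simpa using hq 0 0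

theorem sub_pow_of_add_pow (a b : F) : (a - b) ^ q = a ^ q - b ^ q :=
  eq_sub_of_add_eq (by rw [← hq, sub_add_cancel])

theorem Fl_sub_Fl (l m x y : F) :
    Fl q l x y - Fl q m x y = ((l - m) * x) ^ q + (l - m) * x := by
  rw [mul_pow, sub_pow_of_add_pow hq, Fl, Fl]
  ring

theorem Fl_sub_right (l x y z : F) : Fl q l x (y - z) = Fl q l x y - (z ^ q + z) := by
  rw [Fl, Fl, sub_pow_of_add_pow hq]
  ring

theorem Fl_zero_eq_Fl_zero (l m y : F) : Fl q l 0 y = Fl q m 0 y := by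
  rw [← sub_eq_zero, Fl_sub_Fl hq, mul_zero, zero_pow (ne_zero_of_add_pow hq), add_zero]

theorem Fl_pow_self (hpow : ∀ z : F, z ^ (q ^ 2) = z) (l x y : F) :
    Fl q l x y ^ q = Fl q l x y := by
  have hpow' (z : F) : (z ^ q) ^ q = z := by rw [← pow_mul, ← sq, hpow]
  simp only [Fl, hq, mul_pow, pow_succ, hpow']
  ring

theorem pow_sub_one_eq_neg_one {w : F} (hw : w ≠ 0) (hw' : w ^ q + w = 0) :
    w ^ (q - 1) = -1 := by
  refine mul_right_cancel₀ hw ?_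
  rw [← pow_succ, Nat.sub_add_cancel (Nat.one_le_iff_ne_zero.2 (ne_zero_of_add_pow hq))]
  linear_combination hw'

theorem div_pow_sub_one_eq_one_of_Fl_eq_zero {x y α β γ : F} (hx : x ≠ 0)
    (hαβ : α ≠ β) (hγβ : γ ≠ β)
    (hα : Fl q α x y = 0) (hβ : Fl q β x y = 0) (hγ : Fl q γ x y = 0) :
    ((α - β) / (γ - β)) ^ (q - 1) = 1 := by
  have hu := Fl_sub_Fl hq α β x y
  have hv := Fl_sub_Fl hq γ β x y
  rw [hα, hβ, sub_zero, eq_comm] at hu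
  rw [hγ, hβ, sub_zero, eq_comm] at hv
  rw [← mul_div_mul_right _ _ hx, div_pow,
    pow_sub_one_eq_neg_one hq (mul_ne_zero (sub_ne_zero.2 hαβ) hx) hu,
    pow_sub_one_eq_neg_one hq (mul_ne_zero (sub_ne_zero.2 hγβ) hx) hv,
    div_self (neg_ne_zero.2 one_ne_zero)]

end AdditivePower

section Arc

variable {F : Type*} [Field F]

def IsArc (q : ℕ) (Λ : Finset F) : Prop :=
  ∀ α ∈ Λ, ∀ β ∈ Λ, ∀ γ ∈ Λ, α ≠ β → α ≠ γ → β ≠ γ →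
    ((α - β) / (γ - β)) ^ (q - 1) ≠ 1

variable {q : ℕ} {Λ : Finset F} (hΛ : IsArc q Λ)
  (hq : ∀ a b : F, (a + b) ^ q = a ^ q + b ^ q)
include hΛ hq

theorem IsArc.Fl_ne_zero {x y α β γ : F} (hα : α ∈ Λ) (hβ : β ∈ Λ) (hγ : γ ∈ Λ)
    (hx : x ≠ 0) (hαβ : α ≠ β) (hαγ : α ≠ γ) (hβγ : β ≠ γ)
    (hα0 : Fl q α x y = 0) (hβ0 : Fl q β x y = 0) :
    Fl q γ x y ≠ 0 := fun hγ0 ↦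
  hΛ α hα β hβ γ hγ hαβ hαγ hβγ
    (div_pow_sub_one_eq_one_of_Fl_eq_zero hq hx hαβ hβγ.symm hα0 hβ0 hγ0)

open Classical in
theorem IsArc.card_filter_Fl_eq_zero_le_two {x y : F} (hne : ∃ l ∈ Λ, Fl q l x y ≠ 0) :
    (Finset.univ.filter fun l : Λ ↦ Fl q (l : F) x y = 0).card ≤ 2 := by
  obtain ⟨m, -, hm⟩ := hne
  by_cases hx : x = 0
  · subst hx
    simp [Fl_zero_eq_Fl_zero hq _ m, hm]
  by_contra! h
  obtain ⟨a, ha, b, hb, c, hc, hab, hac, hbc⟩ := Finset.two_lt_card.1 h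
  simp only [Finset.mem_filter, Finset.mem_univ, true_and] at ha hb hc
  exact hΛ.Fl_ne_zero hq a.2 b.2 c.2 hx (Subtype.coe_injective.ne hab)
    (Subtype.coe_injective.ne hac) (Subtype.coe_injective.ne hbc) ha hb hc

end Arc

theorem ncard_setOf_pow_eq_mul_le {R : Type*} [CommRing R] [IsDomain R] {q : ℕ} (hq : 2 ≤ q)
    (c : R) : {z : R | z ^ q = c * z}.ncard ≤ q := by
  have hdeg : (C c * X).degree < (q : WithBot ℕ) :=
    (degree_C_mul_X_le c).trans_lt (by exact_mod_cast hq)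
  have hP : X ^ q - C c * X ≠ 0 := (monic_X_pow_sub hdeg).ne_zero
  calc {z : R | z ^ q = c * z}.ncard = ((X ^ q - C c * X).rootSet R).ncard := by
        congr 1; ext z; simp [mem_rootSet, hP, sub_eq_zero]
    _ ≤ (X ^ q - C c * X).natDegree := ncard_rootSet_le _ R
    _ ≤ q := (natDegree_sub_le_of_le (natDegree_X_pow_le q)
      (natDegree_le_of_degree_le hdeg.le)).trans_eq (max_self q)

theorem two_le_of_card_eq_sq {α : Type*} [Fintype α] [Nontrivial α] {q : ℕ}
    (h : Fintype.card α = q ^ 2) : 2 ≤ q := by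
  have := Fintype.one_lt_card (α := α)
  by_contra
  interval_cases q <;> simp_all

section Trace

variable {F : Type*} [Field F] [Fintype F] {q : ℕ}

theorem ncard_setOf_pow_eq_self_le (hF : Fintype.card F = q ^ 2) :
    {w : F | w ^ q = w}.ncard ≤ q := by
  simpa using ncard_setOf_pow_eq_mul_le (two_le_of_card_eq_sq hF) (1 : F)

theorem add_pow_of_card_eq_sq (hq : IsPrimePow q) (hF : Fintype.card F = q ^ 2) (a b : F) :
    (a + b) ^ q = a ^ q + b ^ q := by
  obtain ⟨p, k, hp, -, rfl⟩ := hq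
  have : Fact p.Prime := ⟨Nat.prime_iff.2 hp⟩
  have : CharP F p := charP_of_card_eq_prime_pow (hF.trans (pow_mul p k 2).symm)
  exact add_pow_char_pow ..

variable (hq : ∀ a b : F, (a + b) ^ q = a ^ q + b ^ q)

def powAddSelfHom : F →+ F :=
  AddMonoidHom.mk' (fun z ↦ z ^ q + z) fun a b ↦ by rw [hq]; ring

variable (hF : Fintype.card F = q ^ 2)
include hq hF

theorem coe_range_powAddSelfHom_subset :
    ((powAddSelfHom hq).range : Set F) ⊆ {w | w ^ q = w} := by
  rintro _ ⟨z, rfl⟩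
  simp only [powAddSelfHom, AddMonoidHom.mk'_apply, Set.mem_ofPred_eq, hq, ← pow_mul, ← sq,
    ← hF, FiniteField.pow_card, add_comm]

theorem natCard_ker_powAddSelfHom_eq_and_natCard_range_eq :
    Nat.card (powAddSelfHom hq).ker = q ∧ Nat.card (powAddSelfHom hq).range = q := by
  have hq2 := two_le_of_card_eq_sq hF
  have hker : Nat.card (powAddSelfHom hq).ker ≤ q := by
    convert ncard_setOf_pow_eq_mul_le hq2 (-1 : F) using 1
    rw [← Nat.card_coe_set_eq]
    congr
    ext z
    simp [powAddSelfHom, add_eq_zero_iff_eq_neg]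
  have hrange : Nat.card (powAddSelfHom hq).range ≤ q :=
    (Set.ncard_le_ncard (coe_range_powAddSelfHom_subset hq hF)).trans
      (ncard_setOf_pow_eq_self_le hF)
  have hprod :
      Nat.card (powAddSelfHom hq).ker * Nat.card (powAddSelfHom hq).range = q ^ 2 := by
    rw [← AddSubgroup.index_ker, AddSubgroup.card_mul_index, Nat.card_eq_fintype_card, hF]
  constructor <;> nlinarith

theorem exists_ne_zero_pow_add_self_eq_zero : ∃ u : F, u ≠ 0 ∧ u ^ q + u = 0 := by
  have : Nontrivial (powAddSelfHom hq).ker := by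
    rw [← Finite.one_lt_card_iff_nontrivial,
      (natCard_ker_powAddSelfHom_eq_and_natCard_range_eq hq hF).1]
    exact two_le_of_card_eq_sq hF
  obtain ⟨⟨u, hu⟩, hu0⟩ := exists_ne (0 : (powAddSelfHom hq).ker)
  exact ⟨u, fun h ↦ hu0 (Subtype.ext h), hu⟩

theorem exists_pow_add_self_eq_of_pow_eq_self {w : F} (hw : w ^ q = w) :
    ∃ z : F, z ^ q + z = w := by
  have hrange := Set.eq_of_subset_of_ncard_le (coe_range_powAddSelfHom_subset hq hF) ?_
  · obtain ⟨z, hz⟩ : w ∈ (powAddSelfHom hq).range := by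
      rw [← SetLike.mem_coe, hrange, Set.mem_ofPred_eq, hw]
    exact ⟨z, hz⟩
  exact (ncard_setOf_pow_eq_self_le hF).trans_eq
    (natCard_ker_powAddSelfHom_eq_and_natCard_range_eq hq hF).2.symm

theorem exists_Fl_eq_zero_Fl_eq_zero {S : Set F}
    (hS : ∀ z : F, ∃ s ∈ S, (z - s) ^ q + (z - s) = 0) {α β : F} (hαβ : α ≠ β) :
    ∃ x ≠ 0, ∃ s ∈ S, Fl q α x s = 0 ∧ Fl q β x s = 0 := by
  obtain ⟨u, hu0, hu⟩ := exists_ne_zero_pow_add_self_eq_zero hq hF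
  have hpow (z : F) : z ^ (q ^ 2) = z := by rw [← hF, FiniteField.pow_card]
  obtain ⟨z, hz⟩ :=
    exists_pow_add_self_eq_of_pow_eq_self hq hF (Fl_pow_self hq hpow α (u / (α - β)) 0)
  obtain ⟨s, hsS, hs⟩ := hS (0 - z)
  have hα : Fl q α (u / (α - β)) s = 0 := by
    rw [← sub_sub_cancel (0 - z) s, Fl_sub_right hq, Fl_sub_right hq, hz, hs]
    ring
  have hβ := Fl_sub_Fl hq α β (u / (α - β)) s
  rw [mul_div_cancel₀ u (sub_ne_zero.2 hαβ), hu, hα, zero_sub, neg_eq_zero] at hβ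
  exact ⟨u / (α - β), div_ne_zero hu0 (sub_ne_zero.2 hαβ), s, hsS, hα, hβ⟩

end Trace

open Classical in
/-- The code `C` has minimum distance exactly `N - 2`: every nonzero codeword
`(F_λ(x,y))_{λ∈Λ}` has at most `2` zero coordinates, and some nonzero codeword has
exactly `2` zero coordinates. -/
theorem code_min_distance (q : ℕ) (hq : IsPrimePow q)
    (F : Type) [Field F] [Fintype F] (hF : Fintype.card F = q ^ 2)
    (S : Set F) (hS : ∀ z : F, ∃! s : F, s ∈ S ∧ (z - s) ^ q + (z - s) = 0)
    (Λ : Finset F) (hΛ : 3 ≤ Λ.card)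
    (harc : ∀ α ∈ Λ, ∀ β ∈ Λ, ∀ γ ∈ Λ, α ≠ β → α ≠ γ → β ≠ γ →
      ((α - β) / (γ - β)) ^ (q - 1) ≠ 1) :
    (∀ x y : F, y ∈ S → (∃ l ∈ Λ, Fl q l x y ≠ 0) →
      (Finset.univ.filter fun l : (Λ : Type) => Fl q (l : F) x y = 0).card ≤ 2) ∧
    (∃ x y : F, y ∈ S ∧ (∃ l ∈ Λ, Fl q l x y ≠ 0) ∧
      (Finset.univ.filter fun l : (Λ : Type) => Fl q (l : F) x y = 0).card = 2) := by
  have hadd := add_pow_of_card_eq_sq hq hF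
  have hΛarc : IsArc q Λ := harc
  obtain ⟨α, hα, β, hβ, γ, hγ, hαβ, hαγ, hβγ⟩ := Finset.two_lt_card.1 hΛ
  obtain ⟨x, hx, s, hsS, hαs, hβs⟩ :=
    exists_Fl_eq_zero_Fl_eq_zero hadd hF (fun z ↦ (hS z).exists) hαβ
  have hγs := hΛarc.Fl_ne_zero hadd hα hβ hγ hx hαβ hαγ hβγ hαs hβs
  refine ⟨fun x y _ hne ↦ hΛarc.card_filter_Fl_eq_zero_le_two hadd hne,
    x, s, hsS, ⟨γ, hγ, hγs⟩, ?_⟩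
  refine (hΛarc.card_filter_Fl_eq_zero_le_two hadd ⟨γ, hγ, hγs⟩).antisymm ?_
  exact Finset.one_lt_card.2 ⟨⟨α, hα⟩, by simpa using hαs, ⟨β, hβ⟩, by simpa using hβs,
    ne_of_apply_ne Subtype.val hαβ⟩
end
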